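/- arXiv:1307.1633 — 3 statements merged into one kernel-verified Lean document; each statement's English description precedes it below -/
import Mathlib

section
/- For integers d ≥ 1 and r ≥ 2, the identity binom(r+d-2, d)² - binom(r+d-2, d-1)·binom(r+d-2, d+1) = (1/(d+1))·binom(d+r-2, r-2)·binom(d+r-1, r-1) holds. -/
theorem grassmannian_graded_piece_dim_identity (d r : ℕ) (hd : 1 ≤ d) (hr : 2 ≤ r) :
    ((r + d - 2).choose d : ℚ) ^ 2 -
        ((r + d - 2).choose (d - 1) : ℚ) * ((r + d - 2).choose (d + 1) : ℚ) =
      (1 / (d + 1 : ℚ)) * ((d + r - 2).choose (r - 2) : ℚ) *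
        ((d + r - 1).choose (r - 1) : ℚ) := by
  obtain ⟨e, rfl⟩ : ∃ e, d = e + 1 := ⟨d - 1, by omega⟩
  rcases Nat.lt_or_ge r 3 with h3 | h3
  · obtain rfl : r = 2 := by omega
    simp only [show 2 + (e + 1) - 2 = e + 1 from by omega,
      show e + 1 - 1 = e from rfl, show e + 1 + 2 - 2 = e + 1 from by omega,
      show e + 1 + 2 - 1 = e + 2 from rfl, show (2 : ℕ) - 2 = 0 from rfl,
      show (2 : ℕ) - 1 = 1 from rfl]
    rw [Nat.choose_self, Nat.choose_succ_self_right, Nat.choose_zero_right,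
      Nat.choose_eq_zero_of_lt (by omega), Nat.choose_one_right]
    push_cast
    have : (e : ℚ) + 1 + 1 ≠ 0 := by positivity
    field_simp
    ring
  · obtain ⟨a, rfl⟩ : ∃ a, r = a + 3 := ⟨r - 3, by omega⟩
    have h1 : a + 3 + (e + 1) - 2 = a + e + 2 := by omega
    have h2 : e + 1 + (a + 3) - 2 = a + e + 2 := by omega
    have h3 : e + 1 + (a + 3) - 1 = a + e + 3 := by omega
    have h4 : a + 3 - 2 = a + 1 := rfl
    have h5 : a + 3 - 1 = a + 2 := rfl
    have h6 : e + 1 - 1 = e := rfl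
    rw [h1, h2, h3, h4, h5, h6]
    rw [Nat.cast_choose ℚ (show e + 1 ≤ a + e + 2 by omega),
      Nat.cast_choose ℚ (show e ≤ a + e + 2 by omega),
      Nat.cast_choose ℚ (show e + 2 ≤ a + e + 2 by omega),
      Nat.cast_choose ℚ (show a + 1 ≤ a + e + 2 by omega),
      Nat.cast_choose ℚ (show a + 2 ≤ a + e + 3 by omega)]
    have e1 : a + e + 2 - (e + 1) = a + 1 := by omega
    have e2 : a + e + 2 - e = a + 2 := by omega
    have e3 : a + e + 2 - (e + 2) = a := by omega
    have e4 : a + e + 2 - (a + 1) = e + 1 := by omega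
    have e5 : a + e + 3 - (a + 2) = e + 1 := by omega
    rw [e1, e2, e3, e4, e5]
    have fe1 : ((e + 1).factorial : ℚ) = (e + 1) * e.factorial := by
      rw [Nat.factorial_succ]; push_cast; ring
    have fe2 : ((e + 2).factorial : ℚ) = (e + 2) * (e + 1) * e.factorial := by
      rw [Nat.factorial_succ, Nat.factorial_succ]; push_cast; ring
    have fa1 : ((a + 1).factorial : ℚ) = (a + 1) * a.factorial := by
      rw [Nat.factorial_succ]; push_cast; ring
    have fa2 : ((a + 2).factorial : ℚ) = (a + 2) * (a + 1) * a.factorial := by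
      rw [Nat.factorial_succ, Nat.factorial_succ]; push_cast; ring
    have fn : ((a + e + 3).factorial : ℚ) = (a + e + 3) * ((a + e + 2).factorial) := by
      rw [show a + e + 3 = (a + e + 2) + 1 from rfl, Nat.factorial_succ]; push_cast; ring
    rw [fe1, fe2, fa1, fa2, fn]
    have he : (e.factorial : ℚ) ≠ 0 := by exact_mod_cast (Nat.factorial_pos e).ne'
    have ha : (a.factorial : ℚ) ≠ 0 := by exact_mod_cast (Nat.factorial_pos a).ne'
    have hn : ((a + e + 2).factorial : ℚ) ≠ 0 := by exact_mod_cast (Nat.factorial_pos _).ne'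
    have p1 : (e : ℚ) + 1 ≠ 0 := by positivity
    have p2 : (e : ℚ) + 2 ≠ 0 := by positivity
    have p3 : (a : ℚ) + 1 ≠ 0 := by positivity
    have p4 : (a : ℚ) + 2 ≠ 0 := by positivity
    push_cast
    field_simp
    ring
end

section
/- For integers d ≥ r ≥ 3, the inequality binom(rd + d, r) ≤ (e·d)ʳ holds, where e is Euler's number. -/
lemma aux_pow_succ_le (r : ℕ) (hr : 1 ≤ r) :
    ((r : ℝ) + 1) ^ r ≤ Real.exp 1 * (r : ℝ) ^ r := by
  have hrpos : (0 : ℝ) < r := by exact_mod_cast hr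
  have h1 : (r : ℝ) + 1 ≤ r * Real.exp (1 / r) := by
    have h := Real.add_one_le_exp (1 / (r : ℝ))
    calc (r : ℝ) + 1 = r * (1 / r + 1) := by field_simp; ring
    _ ≤ r * Real.exp (1 / r) := by
        exact mul_le_mul_of_nonneg_left h hrpos.le
  have h2 := pow_le_pow_left₀ (by positivity) h1 r
  calc ((r : ℝ) + 1) ^ r ≤ ((r : ℝ) * Real.exp (1 / r)) ^ r := h2
  _ = (r : ℝ) ^ r * Real.exp ((r : ℕ) * (1 / r)) := by
      rw [mul_pow, Real.exp_nat_mul]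
  _ = Real.exp 1 * (r : ℝ) ^ r := by
      rw [mul_one_div, div_self hrpos.ne']
      ring

lemma aux_pow_le_factorial : ∀ r : ℕ, 1 ≤ r →
    (r : ℝ) ^ r ≤ Real.exp 1 ^ (r - 1) * (r.factorial : ℝ) := by
  intro r hr
  induction r, hr using Nat.le_induction with
  | base => norm_num
  | succ r hr ih =>
    have h1 := aux_pow_succ_le r hr
    have hrp : (0 : ℝ) ≤ (r : ℝ) + 1 := by positivity
    have hexp : (0:ℝ) < Real.exp 1 := Real.exp_pos 1
    have hsub : r + 1 - 1 = (r - 1) + 1 := by omega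
    push_cast
    calc ((r : ℝ) + 1) ^ (r + 1)
        = ((r : ℝ) + 1) * ((r : ℝ) + 1) ^ r := by push_cast; ring
      _ ≤ ((r : ℝ) + 1) * (Real.exp 1 * (r : ℝ) ^ r) :=
          mul_le_mul_of_nonneg_left h1 hrp
      _ ≤ ((r : ℝ) + 1) * (Real.exp 1 * (Real.exp 1 ^ (r - 1) * (r.factorial : ℝ))) := by
          apply mul_le_mul_of_nonneg_left _ hrp
          exact mul_le_mul_of_nonneg_left ih hexp.le
      _ = Real.exp 1 ^ (r + 1 - 1) * (((r + 1) : ℕ).factorial : ℝ) := by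
          rw [hsub, pow_succ]
          push_cast [Nat.factorial_succ]
          ring

theorem choose_le_ed_pow (d r : ℕ) (hr : 3 ≤ r) (hd : r ≤ d) :
    ((r * d + d).choose r : ℝ) ≤ (Real.exp 1 * d) ^ r := by
  have hr1 : 1 ≤ r := by omega
  have hfac : (0 : ℝ) < (r.factorial : ℝ) := by exact_mod_cast r.factorial_pos
  have hexp : (0:ℝ) < Real.exp 1 := Real.exp_pos 1
  have hdpos : (0:ℝ) ≤ (d : ℝ) := by positivity
  -- choose * r! ≤ n^r
  have h1 : ((r * d + d).choose r : ℝ) * (r.factorial : ℝ) ≤ ((r * d + d : ℕ) : ℝ) ^ r := by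
    have := Nat.descFactorial_le_pow (r * d + d) r
    rw [Nat.descFactorial_eq_factorial_mul_choose] at this
    exact_mod_cast (by rw [mul_comm]; exact this : (r * d + d).choose r * r.factorial ≤ (r * d + d) ^ r)
  have h2 : ((r * d + d : ℕ) : ℝ) ^ r = ((r : ℝ) + 1) ^ r * (d : ℝ) ^ r := by
    push_cast
    rw [← mul_pow]
    ring
  have h3 : ((r : ℝ) + 1) ^ r ≤ Real.exp 1 ^ r * (r.factorial : ℝ) := by
    calc ((r : ℝ) + 1) ^ r ≤ Real.exp 1 * (r : ℝ) ^ r := aux_pow_succ_le r hr1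
    _ ≤ Real.exp 1 * (Real.exp 1 ^ (r - 1) * (r.factorial : ℝ)) :=
        mul_le_mul_of_nonneg_left (aux_pow_le_factorial r hr1) hexp.le
    _ = Real.exp 1 ^ r * (r.factorial : ℝ) := by
        rw [← mul_assoc, ← pow_succ']
        congr 2
        omega
  have h4 : ((r * d + d).choose r : ℝ) * (r.factorial : ℝ) ≤
      (Real.exp 1 * d) ^ r * (r.factorial : ℝ) := by
    calc ((r * d + d).choose r : ℝ) * (r.factorial : ℝ) ≤ ((r * d + d : ℕ) : ℝ) ^ r := h1
    _ = ((r : ℝ) + 1) ^ r * (d : ℝ) ^ r := h2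
    _ ≤ Real.exp 1 ^ r * (r.factorial : ℝ) * (d : ℝ) ^ r := by
        exact mul_le_mul_of_nonneg_right h3 (by positivity)
    _ = (Real.exp 1 * d) ^ r * (r.factorial : ℝ) := by rw [mul_pow]; ring
  exact le_of_mul_le_mul_right h4 hfac
end

section
/- Let d ≥ 2 and let ℓ be the smallest prime divisor of d. For any divisor k of d with k > ℓ, and any integer r ≥ 3, define b(m) = 3(r-2) + d(d/m + 3)/(2m) when d/m ≥ 4r-8 and b(m) = 2d(r-1)/m when d/m ≤ 4r-7 (for divisors m of d). If d/ℓ ≥ 4r - 8, then k·b(k) < ℓ·b(ℓ) = 3ℓ(r-2) + d(d/ℓ + 3)/2. -/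
set_option maxHeartbeats 1000000 in
theorem weighted_dim_decreasing (d k ℓ r : ℕ) (hd : 2 ≤ d) (hr : 3 ≤ r)
    (hℓ : ℓ = d.minFac) (hk : k ∣ d) (hkℓ : ℓ < k)
    (hdℓ : 4 * (r : ℚ) - 8 ≤ (d : ℚ) / ℓ)
    (b : ℕ → ℚ)
    (hb : ∀ m : ℕ, m ∣ d →
      (4 * (r : ℚ) - 8 ≤ (d : ℚ) / m →
        b m = 3 * ((r : ℚ) - 2) + (d : ℚ) * ((d : ℚ) / m + 3) / (2 * m)) ∧
      ((d : ℚ) / m ≤ 4 * (r : ℚ) - 7 → b m = 2 * (d : ℚ) * ((r : ℚ) - 1) / m)) :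
    (k : ℚ) * b k < (ℓ : ℚ) * b ℓ ∧
      (ℓ : ℚ) * b ℓ = 3 * (ℓ : ℚ) * ((r : ℚ) - 2) + (d : ℚ) * ((d : ℚ) / ℓ + 3) / 2 := by
  have hℓp : ℓ.Prime := hℓ ▸ Nat.minFac_prime (by omega)
  have hℓd : ℓ ∣ d := hℓ ▸ Nat.minFac_dvd d
  have hℓ2 : 2 ≤ ℓ := hℓp.two_le
  have hL0 : (0:ℚ) < (ℓ:ℚ) := by exact_mod_cast by omega
  have hK0 : (0:ℚ) < (k:ℚ) := by exact_mod_cast by omega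
  have hR : (3:ℚ) ≤ (r:ℚ) := by exact_mod_cast hr
  have hLK : (ℓ:ℚ) < (k:ℚ) := by exact_mod_cast hkℓ
  have hx : (d:ℚ)/ℓ * ℓ = d := div_mul_cancel₀ _ hL0.ne'
  have hy : (d:ℚ)/k * k = d := div_mul_cancel₀ _ hK0.ne'
  have hdx : (d:ℚ) * ((d:ℚ)/ℓ) = ((d:ℚ)/ℓ) * ((d:ℚ)/ℓ) * ℓ := by
    rw [mul_assoc, hx, mul_comm]
  have hdy : (d:ℚ) * ((d:ℚ)/k) = ((d:ℚ)/k) * ((d:ℚ)/k) * k := by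
    rw [mul_assoc, hy, mul_comm]
  have hcast : ((d / k : ℕ) : ℚ) = (d:ℚ) / k := by
    rw [Nat.cast_div hk hK0.ne']
  have e2 : (ℓ:ℚ) * b ℓ = 3 * (ℓ:ℚ) * ((r:ℚ) - 2) + (d:ℚ) * ((d:ℚ)/ℓ + 3) / 2 := by
    rw [(hb ℓ hℓd).1 hdℓ]
    field_simp
  refine ⟨?_, e2⟩
  rw [e2]
  by_cases hc : 4 * r ≤ d / k + 8
  · -- case d/k ≥ 4r - 8
    have h1 : ((4 * r : ℕ) : ℚ) ≤ ((d / k + 8 : ℕ) : ℚ) := by exact_mod_cast hc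
    push_cast at h1
    rw [hcast] at h1
    have hcase : 4 * (r:ℚ) - 8 ≤ (d:ℚ)/k := by linarith
    rw [(hb k hk).1 hcase]
    have hk2 : (k:ℚ) * (3 * ((r:ℚ) - 2) + (d:ℚ) * ((d:ℚ)/k + 3) / (2 * k))
        = 3 * (k:ℚ) * ((r:ℚ) - 2) + (d:ℚ) * ((d:ℚ)/k + 3) / 2 := by
      field_simp
    rw [hk2]
    set x := (d:ℚ)/ℓ with hxdef
    set y := (d:ℚ)/k with hydef
    set K := (k:ℚ)
    set L := (ℓ:ℚ)
    set R := (r:ℚ)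
    clear hb hc hcast h1 e2 hℓ
    have hexp : x * y * (K - L) = x * x * L - y * y * K := by
      linear_combination x * hy - y * hx - x * hx + y * hy
    have h1' : (0:ℚ) < K - L := by linarith
    have hs : (0:ℚ) < R - 2 := by linarith
    have hA : (4 * R - 8) * (4 * R - 8) ≤ x * y := by
      have h4 : (0:ℚ) ≤ 4 * R - 8 := by linarith
      exact mul_le_mul hdℓ hcase h4 (by linarith)
    have hB : (4 * R - 8) * (4 * R - 8) * (K - L) ≤ x * y * (K - L) :=
      mul_le_mul_of_nonneg_right hA h1'.le
    have hC : 3 * (K - L) * (R - 2) < (4 * R - 8) * (4 * R - 8) * (K - L) / 2 := by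
      nlinarith [mul_pos h1' hs, mul_pos (mul_pos h1' hs) hs]
    have goal : 3 * (K - L) * (R - 2) < x * y * (K - L) / 2 := by linarith
    nlinarith [goal, hexp, hdx, hdy]
  · -- case d/k ≤ 4r - 9 ≤ 4r - 7
    have h1 : (d / k : ℕ) ≤ 4 * r - 9 := by omega
    have h1' : ((d / k : ℕ) : ℚ) ≤ ((4 * r - 9 : ℕ) : ℚ) := by exact_mod_cast h1
    have h2 : ((4 * r - 9 : ℕ) : ℚ) = 4 * (r:ℚ) - 9 := by
      have h9 : (9:ℕ) ≤ 4 * r := by omega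
      push_cast [h9]; ring
    have hcase : (d:ℚ)/k ≤ 4 * (r:ℚ) - 7 := by
      rw [← hcast]; rw [h2] at h1'; linarith
    rw [(hb k hk).2 hcase]
    have hk2 : (k:ℚ) * (2 * (d:ℚ) * ((r:ℚ) - 1) / k) = 2 * (d:ℚ) * ((r:ℚ) - 1) := by
      field_simp
    rw [hk2]
    set x := (d:ℚ)/ℓ with hxdef
    set L := (ℓ:ℚ)
    set R := (r:ℚ)
    clear hb hc hcast h1 h1' h2 hcase e2 hℓ
    have hs : (0:ℚ) < R - 2 := by linarith
    nlinarith [hx, hdx, mul_pos hL0 hs,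
      mul_nonneg (mul_nonneg hL0.le (show (0:ℚ) ≤ x - (4 * R - 8) by linarith))
        (show (0:ℚ) ≤ x - 1 by nlinarith)]
end
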